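/- arXiv:1512.08141 — 2 statements merged into one kernel-verified Lean document; each statement's English description precedes it below -/
import Mathlib

section
/- The cycle graph C_n of length n ≥ 3 satisfies Serre's condition S_2 if and only if n = 3, 5, or 7. -/
/-- The circulant graph `C_n(S)` on vertex set `ZMod n`: `i` and `j` are adjacent
iff `i ≠ j` and `|i-j| ∈ S` or `n - |i-j| ∈ S` (encoded via `ZMod` subtraction). -/
def circulantGraph (n : ℕ) (S : Set ℕ) : SimpleGraph (ZMod n) where
  Adj i j := i ≠ j ∧ ((i - j).val ∈ S ∨ (j - i).val ∈ S)
  symm := ⟨fun i j h => ⟨h.1.symm, h.2.symm⟩⟩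
  loopless := ⟨fun i h => h.1 rfl⟩

/-- An (abstract) simplicial complex on vertex type `V`, as a downward closed
family of finite subsets of `V`. -/
def IsComplex {V : Type*} (Δ : Set (Finset V)) : Prop :=
  ∀ F ∈ Δ, ∀ G ⊆ F, G ∈ Δ

/-- The link of a face `F` in the complex `Δ`. -/
def linkC {V : Type*} [DecidableEq V] (Δ : Set (Finset V)) (F : Finset V) : Set (Finset V) :=
  {G | Disjoint G F ∧ G ∪ F ∈ Δ}

/-- A complex is connected if any two of its vertices can be joined by a path
of 1-dimensional faces. -/
def ComplexConnected {V : Type*} [DecidableEq V] (Δ : Set (Finset V)) : Prop :=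
  ∀ u, ({u} : Finset V) ∈ Δ → ∀ w, ({w} : Finset V) ∈ Δ →
    Relation.ReflTransGen (fun a b => a ≠ b ∧ ({a, b} : Finset V) ∈ Δ) u w

/-- Serre's condition `S₂` for a simplicial complex: the link of every face of the
complex whose link has dimension at least `1` is connected. -/
def IsS2 {V : Type*} [DecidableEq V] (Δ : Set (Finset V)) : Prop :=
  ∀ F ∈ Δ, (∃ G ∈ linkC Δ F, 2 ≤ G.card) → ComplexConnected (linkC Δ F)

/-- The independence complex of a graph: faces are the (finite) independent sets. -/
def IndComplex {V : Type*} (G : SimpleGraph V) : Set (Finset V) :=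
  {F | ∀ u ∈ F, ∀ v ∈ F, ¬ G.Adj u v}

/-- A graph is `S₂` if its independence complex is `S₂`. -/
def GraphS2 {V : Type*} [DecidableEq V] (G : SimpleGraph V) : Prop :=
  IsS2 (IndComplex G)

/-- The facets (maximal faces) of a complex. -/
def facetsOf {V : Type*} (Δ : Set (Finset V)) : Set (Finset V) :=
  {F | F ∈ Δ ∧ ∀ G ∈ Δ, F ⊆ G → F = G}

/-- A graph is well-covered if all its maximal independent sets have the same cardinality. -/
def WellCovered {V : Type*} (G : SimpleGraph V) : Prop :=
  ∀ A ∈ facetsOf (IndComplex G), ∀ B ∈ facetsOf (IndComplex G), A.card = B.card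

/-- A complex is pure if all its facets have the same cardinality. -/
def IsPure {V : Type*} (Δ : Set (Finset V)) : Prop :=
  ∀ F ∈ facetsOf Δ, ∀ G ∈ facetsOf Δ, F.card = G.card

/-- `L` is a shelling order of `Δ`: a linear order `F₁, …, Fₛ` of all the facets of `Δ`
such that for all `i < j` there are `v ∈ Fⱼ \ Fᵢ` and `l < j` with `Fⱼ \ F_l = {v}`. -/
def IsShellingOrder {V : Type*} [DecidableEq V] (Δ : Set (Finset V)) (L : List (Finset V)) : Prop :=
  L.Nodup ∧ (∀ F, F ∈ facetsOf Δ ↔ F ∈ L) ∧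
    ∀ i j : Fin L.length, i < j →
      ∃ v ∈ L.get j \ L.get i, ∃ l : Fin L.length, l < j ∧ L.get j \ L.get l = {v}

/-- A complex is shellable if its facets admit a shelling order. -/
def IsShellable {V : Type*} [DecidableEq V] (Δ : Set (Finset V)) : Prop :=
  ∃ L : List (Finset V), IsShellingOrder Δ L

/-- A pure complex is strongly connected if any two facets are joined by a sequence of
facets in which consecutive facets intersect in one element fewer than their cardinality. -/
def StronglyConnectedComplex {V : Type*} [DecidableEq V] (Δ : Set (Finset V)) : Prop :=
  ∀ F ∈ facetsOf Δ, ∀ F' ∈ facetsOf Δ,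
    Relation.ReflTransGen
      (fun A B => A ∈ facetsOf Δ ∧ B ∈ facetsOf Δ ∧ (A ∩ B).card = A.card - 1) F F'

/-- The join of two simplicial complexes (on disjoint vertex sets). -/
def joinC {V : Type*} [DecidableEq V] (Δ₁ Δ₂ : Set (Finset V)) : Set (Finset V) :=
  {F | ∃ F₁ ∈ Δ₁, ∃ F₂ ∈ Δ₂, F = F₁ ∪ F₂}

/-- The generating set of the one-paired circulant graph `C(n; a, b)`. -/
def onePairedSet (n a b : ℕ) : Set ℕ :=
  {d | 1 ≤ d ∧ d ≤ n / 2 ∧ a ∣ d ∧ ¬ (a * b ∣ d)}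

/-!
The link of an independent set `F` in `Ind(C_n)` has as vertices the *free* vertices, those
outside the closed neighbourhood of `F`, and its edges are the non-adjacent pairs of free
vertices. For `n ≥ 5`, two adjacent free vertices `u, u + 1` are joined through any other free
vertex outside `{u - 1, …, u + 2}`, or along `u, u + 2, u - 1, u + 1`; so a link of dimension
at least one can only be disconnected when its free vertices are exactly `c - 1, c, c + 1`, and
then `c` is isolated. Such an `F` exists when `n = 6` or `n ≥ 8`. It does not when `n = 5, 7`:
if `c ± 1` are free and `c ± 2` are not, then `c ± 3 ∈ F`, but in `C_5` the vertex `c - 3` is a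
neighbour of `c + 1`, and in `C_7` the vertices `c + 3, c - 3` are adjacent. Finally `Ind(C_4)`
is two disjoint edges and no link in `Ind(C_3)` has dimension one.
-/

open Finset Relation

section IndependenceComplex

variable {V : Type*} [DecidableEq V]

theorem IsComplex.linkC {Δ : Set (Finset V)} (hΔ : IsComplex Δ) (F : Finset V) :
    IsComplex (linkC Δ F) := fun _ hG _ hG' =>
  ⟨hG.1.mono_left hG', hΔ _ hG.2 _ (union_subset_union hG' le_rfl)⟩

theorem IsComplex.exists_pair_mem {Δ : Set (Finset V)} (hΔ : IsComplex Δ)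
    (h : ∃ G ∈ Δ, 2 ≤ G.card) : ∃ a b, a ≠ b ∧ {a, b} ∈ Δ := by
  obtain ⟨G, hG, hcard⟩ := h
  obtain ⟨a, ha, b, hb, hab⟩ := one_lt_card.mp hcard
  exact ⟨a, b, hab, hΔ G hG _ (insert_subset ha (singleton_subset_iff.mpr hb))⟩

abbrev oneSkeletonAdj (Δ : Set (Finset V)) (a b : V) : Prop :=
  a ≠ b ∧ {a, b} ∈ Δ

theorem reflTransGen_oneSkeletonAdj_symm {Δ : Set (Finset V)} {u w : V}
    (h : ReflTransGen (oneSkeletonAdj Δ) u w) : ReflTransGen (oneSkeletonAdj Δ) w u :=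
  ReflTransGen.mono (fun _ _ ⟨hab, hmem⟩ => ⟨hab.symm, by rwa [pair_comm]⟩) _ _
    (ReflTransGen.swap _ _ h)

theorem not_complexConnected_of_closed {Δ : Set (Finset V)} (S : Set V)
    (hS : ∀ a b, a ≠ b → {a, b} ∈ Δ → a ∈ S → b ∈ S) {u w : V} (hu : {u} ∈ Δ) (hw : {w} ∈ Δ)
    (huS : u ∈ S) (hwS : w ∉ S) : ¬ ComplexConnected Δ := by
  intro h
  suffices ∀ x, ReflTransGen (oneSkeletonAdj Δ) u x → x ∈ S from
    hwS (this w (h u hu w hw))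
  intro x hx
  induction hx with
  | refl => exact huS
  | tail _ hbc ih => exact hS _ _ hbc.1 hbc.2 ih

omit [DecidableEq V] in
theorem isComplex_indComplex {G : SimpleGraph V} : IsComplex (IndComplex G) :=
  fun _ hF _ hGF u hu v hv => hF u (hGF hu) v (hGF hv)

variable {G : SimpleGraph V} {F : Finset V}

theorem singleton_mem_linkC_indComplex (hF : F ∈ IndComplex G) {x : V} :
    {x} ∈ linkC (IndComplex G) F ↔ x ∉ F ∧ ∀ y ∈ F, ¬ G.Adj x y := by
  simp only [linkC, IndComplex, Set.mem_ofPred_eq, disjoint_singleton_left, mem_union,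
    mem_singleton]
  refine and_congr_right fun _ => ⟨fun h y hy => h x (.inl rfl) y (.inr hy), fun h => ?_⟩
  rintro u (rfl | hu) v (rfl | hv)
  · exact G.loopless.irrefl _
  · exact h v hv
  · exact fun huv => h u hu huv.symm
  · exact hF u hu v hv

theorem pair_mem_linkC_indComplex (hF : F ∈ IndComplex G) {a b : V} :
    {a, b} ∈ linkC (IndComplex G) F ↔
      {a} ∈ linkC (IndComplex G) F ∧ {b} ∈ linkC (IndComplex G) F ∧ ¬ G.Adj a b := by
  have hlink := (isComplex_indComplex (G := G)).linkC F
  refine ⟨fun h => ⟨hlink _ h _ (by simp), hlink _ h _ (by simp),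
    h.2 a (by simp) b (by simp)⟩, fun ⟨ha, hb, hab⟩ => ?_⟩
  rw [singleton_mem_linkC_indComplex hF] at ha hb
  refine ⟨disjoint_insert_left.mpr ⟨ha.1, disjoint_singleton_left.mpr hb.1⟩, ?_⟩
  simp only [IndComplex, Set.mem_ofPred_eq, mem_union, mem_insert, mem_singleton]
  rintro u ((rfl | rfl) | hu) v ((rfl | rfl) | hv)
  all_goals first
    | exact G.loopless.irrefl _
    | exact hab
    | exact fun h => hab h.symm
    | exact ha.2 _ ‹_›
    | exact hb.2 _ ‹_›
    | exact fun h => ha.2 _ ‹_› h.symm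
    | exact fun h => hb.2 _ ‹_› h.symm
    | exact hF _ ‹_› _ ‹_›

end IndependenceComplex

section Cycle

variable {n : ℕ}

local notation "𝓘" n => IndComplex (circulantGraph n ({1} : Set ℕ))

theorem circulantGraph_one_adj (hn : 1 < n) {i j : ZMod n} :
    (circulantGraph n {1}).Adj i j ↔ i = j + 1 ∨ j = i + 1 := by
  have : Fact (1 < n) := ⟨hn⟩
  simp only [circulantGraph, Set.mem_singleton_iff, ZMod.val_eq_one hn, sub_eq_iff_eq_add']
  refine ⟨And.right, fun h => ⟨?_, h⟩⟩
  rintro rfl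
  rcases h with h | h <;> simp at h

theorem ZMod.eq_add_one_iff_val (hn : 1 < n) {a b : ZMod n} :
    a = b + 1 ↔ a.val = b.val + 1 ∨ (a.val = 0 ∧ b.val + 1 = n) := by
  have : Fact (1 < n) := ⟨hn⟩
  rw [← (ZMod.val_injective n).eq_iff, ZMod.val_add, ZMod.val_one]
  have := ZMod.val_lt a
  have := ZMod.val_lt b
  by_cases hb : b.val + 1 < n
  · rw [Nat.mod_eq_of_lt hb]; omega
  · rw [show b.val + 1 = n by omega, Nat.mod_self]; omega

theorem circulantGraph_one_adj_iff_val (hn : 1 < n) {i j : ZMod n} :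
    (circulantGraph n {1}).Adj i j ↔ i.val = j.val + 1 ∨ j.val = i.val + 1 ∨
      (i.val = 0 ∧ j.val + 1 = n) ∨ (j.val = 0 ∧ i.val + 1 = n) := by
  rw [circulantGraph_one_adj hn, ZMod.eq_add_one_iff_val hn, ZMod.eq_add_one_iff_val hn]
  omega

theorem ne_and_not_adj_of_sub_eq_natCast {a b : ZMod n} {k : ℕ} (hk : 2 ≤ k) (hkn : k + 2 ≤ n)
    (h : b - a = k) : a ≠ b ∧ ¬ (circulantGraph n {1}).Adj a b := by
  have cast_ne_zero : ∀ m : ℕ, 0 < m → m < n → (m : ZMod n) ≠ 0 := fun m hm hmn h0 =>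
    hm.ne' (Nat.eq_zero_of_dvd_of_lt ((ZMod.natCast_eq_zero_iff m n).1 h0) hmn)
  refine ⟨fun hab => cast_ne_zero k (by omega) (by omega) (by rw [← h, hab, sub_self]), ?_⟩
  rw [circulantGraph_one_adj (by omega)]
  rintro (hab | hab)
  · exact cast_ne_zero (k + 1) (by omega) (by omega) (by push_cast; rw [← h, hab]; ring)
  · exact cast_ne_zero (k - 1) (by omega) (by omega)
      (by rw [Nat.cast_sub (by omega), ← h, hab]; ring)

variable {F : Finset (ZMod n)}

theorem two_mul_sub_mem_of_adj_of_not_mem_linkC (hn : 1 < n) (hF : F ∈ 𝓘 n) {a b : ZMod n}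
    (ha : {a} ∈ linkC (𝓘 n) F) (hb : {b} ∉ linkC (𝓘 n) F)
    (hab : (circulantGraph n {1}).Adj a b) : 2 * b - a ∈ F := by
  rw [singleton_mem_linkC_indComplex hF] at ha hb
  have hbF : b ∉ F := fun hbF => ha.2 b hbF hab
  obtain ⟨y, hy, hby⟩ : ∃ y ∈ F, (circulantGraph n {1}).Adj b y := by
    simpa [hbF] using hb
  have hya : y ≠ a := fun h => ha.1 (h ▸ hy)
  rw [circulantGraph_one_adj hn] at hab hby
  have : y = 2 * b - a ∨ y = a := by
    rcases hab with h₁ | h₁ <;> rcases hby with h₂ | h₂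
    exacts [.inl (by linear_combination h₁ - h₂), .inr (by linear_combination h₂ - h₁),
      .inr (by linear_combination h₁ - h₂), .inl (by linear_combination h₂ - h₁)]
  exact this.resolve_right hya ▸ hy

theorem mem_linkC_add_two_or_sub_two (hn : n = 5 ∨ n = 7) (hF : F ∈ 𝓘 n) {c : ZMod n}
    (hl : {c - 1} ∈ linkC (𝓘 n) F) (hr : {c + 1} ∈ linkC (𝓘 n) F) :
    {c + 2} ∈ linkC (𝓘 n) F ∨ {c - 2} ∈ linkC (𝓘 n) F := by
  have hn1 : 1 < n := by omega
  by_contra! h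
  have hr' : c + 3 ∈ F := by
    have := two_mul_sub_mem_of_adj_of_not_mem_linkC hn1 hF hr h.1
      ((circulantGraph_one_adj hn1).2 (.inr (by ring)))
    rwa [show 2 * (c + 2) - (c + 1) = c + 3 by ring] at this
  have hl' : c - 3 ∈ F := by
    have := two_mul_sub_mem_of_adj_of_not_mem_linkC hn1 hF hl h.2
      ((circulantGraph_one_adj hn1).2 (.inl (by ring)))
    rwa [show 2 * (c - 2) - (c - 1) = c - 3 by ring] at this
  rcases hn with rfl | rfl
  · have h5 : (5 : ZMod 5) = 0 := by decide
    rw [show c - 3 = c + 2 by linear_combination -h5] at hl'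
    exact ((singleton_mem_linkC_indComplex hF).1 hr).2 _ hl'
      ((circulantGraph_one_adj hn1).2 (.inr (by ring)))
  · have h7 : (7 : ZMod 7) = 0 := by decide
    rw [show c - 3 = c + 4 by linear_combination -h7] at hl'
    exact hF _ hr' _ hl' ((circulantGraph_one_adj hn1).2 (.inr (by ring)))

theorem oneSkeletonAdj_linkC_of_sub_eq_natCast (hF : F ∈ 𝓘 n) {a b : ZMod n} {k : ℕ}
    (hk : 2 ≤ k) (hkn : k + 2 ≤ n) (h : b - a = k) (ha : {a} ∈ linkC (𝓘 n) F)
    (hb : {b} ∈ linkC (𝓘 n) F) :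
    oneSkeletonAdj (linkC (𝓘 n) F) a b :=
  have hab := ne_and_not_adj_of_sub_eq_natCast hk hkn h
  ⟨hab.1, (pair_mem_linkC_indComplex hF).2 ⟨ha, hb, hab.2⟩⟩

theorem reflTransGen_add_one (hn : 5 ≤ n) (hF : F ∈ 𝓘 n)
    (hrun : ∀ c, {c - 1} ∈ linkC (𝓘 n) F → {c + 1} ∈ linkC (𝓘 n) F →
      {c + 2} ∈ linkC (𝓘 n) F ∨ {c - 2} ∈ linkC (𝓘 n) F)
    (hface : ∃ a b, a ≠ b ∧ {a, b} ∈ linkC (𝓘 n) F) {u : ZMod n}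
    (hu : {u} ∈ linkC (𝓘 n) F) (hu' : {u + 1} ∈ linkC (𝓘 n) F) :
    ReflTransGen (oneSkeletonAdj (linkC (𝓘 n) F)) u (u + 1) := by
  have hn1 : 1 < n := by omega
  have edge {a b : ZMod n} {k : ℕ} (hk : 2 ≤ k) (hkn : k + 2 ≤ n) (h : b - a = k)
      (ha : {a} ∈ linkC (𝓘 n) F) (hb : {b} ∈ linkC (𝓘 n) F) :
      ReflTransGen (oneSkeletonAdj (linkC (𝓘 n) F)) a b :=
    ReflTransGen.single (oneSkeletonAdj_linkC_of_sub_eq_natCast hF hk hkn h ha hb)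
  have via (x : ZMod n) (hx : {x} ∈ linkC (𝓘 n) F) (h₁ : x ≠ u - 1) (h₂ : x ≠ u)
      (h₃ : x ≠ u + 1) (h₄ : x ≠ u + 2) :
      ReflTransGen (oneSkeletonAdj (linkC (𝓘 n) F)) u (u + 1) := by
    refine .tail (.single ⟨h₂.symm, (pair_mem_linkC_indComplex hF).2 ⟨hu, hx, ?_⟩⟩)
      ⟨h₃, (pair_mem_linkC_indComplex hF).2 ⟨hx, hu', ?_⟩⟩ <;>
      rw [circulantGraph_one_adj hn1] <;> rintro (h | h)
    exacts [h₁ (by linear_combination -h), h₃ h, h₄ (by linear_combination h),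
      h₂ (by linear_combination -h)]
  -- a free vertex outside `{u - 1, …, u + 2}` is a common non-neighbour of `u` and `u + 1`;
  -- if `u - 1` and `u + 2` are both free, use the path `u, u + 2, u - 1, u + 1`
  by_cases hl : {u - 1} ∈ linkC (𝓘 n) F <;> by_cases hr : {u + 2} ∈ linkC (𝓘 n) F
  · have h₁ := edge (k := 2) le_rfl (by omega) (by push_cast; ring) hu hr
    have h₂ := edge (k := 3) (by omega) (by omega) (by push_cast; ring) hl hr
    have h₃ := edge (k := 2) le_rfl (by omega) (by push_cast; ring) hl hu'
    exact (h₁.trans (reflTransGen_oneSkeletonAdj_symm h₂)).trans h₃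
  · have hl2 := (hrun u hl hu').resolve_left hr
    have h₁ := edge (k := 2) le_rfl (by omega) (by push_cast; ring) hl2 hu
    have h₂ := edge (k := 3) (by omega) (by omega) (by push_cast; ring) hl2 hu'
    exact (reflTransGen_oneSkeletonAdj_symm h₁).trans h₂
  · have hr3 : {u + 3} ∈ linkC (𝓘 n) F := by
      have := hrun (u + 1) (by rwa [add_sub_cancel_right]) (by rwa [add_assoc, one_add_one_eq_two])
      rw [show u + 1 - 2 = u - 1 by ring, show u + 1 + 2 = u + 3 by ring] at this
      exact this.resolve_right hl
    have h₁ := edge (k := 3) (by omega) (by omega) (by push_cast; ring) hu hr3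
    have h₂ := edge (k := 2) le_rfl (by omega) (by push_cast; ring) hu' hr3
    exact h₁.trans (reflTransGen_oneSkeletonAdj_symm h₂)
  · obtain ⟨x, hx, hxu, hxu'⟩ : ∃ x, {x} ∈ linkC (𝓘 n) F ∧ x ≠ u ∧ x ≠ u + 1 := by
      obtain ⟨a, b, hab, hmem⟩ := hface
      obtain ⟨ha, hb, hnadj⟩ := (pair_mem_linkC_indComplex hF).1 hmem
      by_contra! h
      rw [circulantGraph_one_adj hn1] at hnadj
      rcases eq_or_ne a u with rfl | hau
      · exact hnadj (.inr (h b hb fun hbu => hab hbu.symm))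
      · have ha' := h a ha hau
        rcases eq_or_ne b u with rfl | hbu
        · exact hnadj (.inl ha')
        · exact hab (ha'.trans (h b hb hbu).symm)
    exact via x hx (fun h => hl (h ▸ hx)) hxu hxu' (fun h => hr (h ▸ hx))

theorem graphS2_of_mem_linkC_add_two_or_sub_two (hn : 5 ≤ n)
    (hrun : ∀ F ∈ 𝓘 n, ∀ c, {c - 1} ∈ linkC (𝓘 n) F → {c + 1} ∈ linkC (𝓘 n) F →
      {c + 2} ∈ linkC (𝓘 n) F ∨ {c - 2} ∈ linkC (𝓘 n) F) :
    GraphS2 (circulantGraph n {1}) := by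
  intro F hF hdim u hu w hw
  have hface := (isComplex_indComplex.linkC F).exists_pair_mem hdim
  rcases eq_or_ne u w with rfl | huw
  · rfl
  by_cases hadj : (circulantGraph n {1}).Adj u w
  · rcases (circulantGraph_one_adj (by omega)).1 hadj with rfl | rfl
    · exact reflTransGen_oneSkeletonAdj_symm
        (reflTransGen_add_one hn hF (hrun F hF) hface hw hu)
    · exact reflTransGen_add_one hn hF (hrun F hF) hface hu hw
  · exact .single ⟨huw, (pair_mem_linkC_indComplex hF).2 ⟨hu, hw, hadj⟩⟩

theorem not_graphS2_of_mem_linkC_iff (hn : 4 ≤ n) (hF : F ∈ 𝓘 n) {c : ZMod n}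
    (hfree : ∀ x, {x} ∈ linkC (𝓘 n) F ↔ x = c - 1 ∨ x = c ∨ x = c + 1) :
    ¬ GraphS2 (circulantGraph n {1}) := by
  have hadj : ∀ x, x = c - 1 ∨ x = c + 1 → (circulantGraph n {1}).Adj c x := fun x hx =>
    (circulantGraph_one_adj (by omega)).2 (by rcases hx with rfl | rfl <;> simp)
  have hface := oneSkeletonAdj_linkC_of_sub_eq_natCast (k := 2) hF le_rfl hn (by push_cast; ring)
    ((hfree _).2 (.inl rfl)) ((hfree _).2 (.inr (.inr rfl)))
  intro hS2
  refine not_complexConnected_of_closed {c} ?_ ((hfree c).2 (.inr (.inl rfl)))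
    ((hfree (c + 1)).2 (.inr (.inr rfl))) rfl ?_
    (hS2 F hF ⟨_, hface.2, (card_pair hface.1).ge⟩)
  · rintro a b hab hmem rfl
    obtain ⟨-, hb, hnadj⟩ := (pair_mem_linkC_indComplex hF).1 hmem
    rcases (hfree b).1 hb with hb | hb | hb
    exacts [absurd (hadj b (.inl hb)) hnadj, hb, absurd (hadj b (.inr hb)) hnadj]
  · exact fun h : c + 1 = c => (hadj _ (.inr rfl)).ne h.symm

theorem graphS2_three : GraphS2 (circulantGraph 3 {1}) := by
  intro F hF hdim
  obtain ⟨a, b, hab, hmem⟩ := (isComplex_indComplex.linkC F).exists_pair_mem hdim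
  have hC₃ : ∀ a b : ZMod 3, a ≠ b → a = b + 1 ∨ b = a + 1 := by decide
  exact absurd ((circulantGraph_one_adj (by norm_num)).2 (hC₃ a b hab))
    ((pair_mem_linkC_indComplex hF).1 hmem).2.2

theorem not_graphS2_four : ¬ GraphS2 (circulantGraph 4 {1}) := by
  have hF : (∅ : Finset (ZMod 4)) ∈ 𝓘 4 := by simp [IndComplex]
  have hfree : ∀ x, {x} ∈ linkC (𝓘 4) ∅ := fun x => by
    simp [singleton_mem_linkC_indComplex hF]
  have hface : ({0, 2} : Finset (ZMod 4)) ∈ linkC (𝓘 4) ∅ :=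
    (pair_mem_linkC_indComplex hF).2 ⟨hfree 0, hfree 2, by
      rw [circulantGraph_one_adj (by norm_num)]; decide⟩
  intro hS2
  refine not_complexConnected_of_closed {0, 2} ?_ (hfree 0) (hfree 1) (by simp) (by decide)
    (hS2 ∅ hF ⟨_, hface, by decide⟩)
  intro a b hab hmem
  have hnadj := ((pair_mem_linkC_indComplex hF).1 hmem).2.2
  rw [circulantGraph_one_adj (by norm_num)] at hnadj
  exact (by decide : ∀ a b : ZMod 4, a ≠ b → ¬(a = b + 1 ∨ b = a + 1) →
    a = 0 ∨ a = 2 → b = 0 ∨ b = 2) a b hab hnadj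

theorem exists_mem_linkC_iff_of_ne_seven (h6 : 6 ≤ n) (h7 : n ≠ 7) :
    ∃ F ∈ 𝓘 n, ∃ c : ZMod n, ∀ x, {x} ∈ linkC (𝓘 n) F ↔ x = c - 1 ∨ x = c ∨ x = c + 1 := by
  have hn1 : 1 < n := by omega
  have : NeZero n := ⟨by omega⟩
  -- an independent subset of `[3, n - 3]` dominating `[2, n - 2]`: only `-1, 0, 1` stay free
  let P : ℕ → Prop := fun v => v = n - 3 ∨ (v % 2 = 1 ∧ 3 ≤ v ∧ v + 5 ≤ n)
  let F := univ.filter fun x : ZMod n => P x.val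
  have hmem : ∀ x, x ∈ F ↔ P x.val := by simp [F]
  have hF : F ∈ 𝓘 n := by
    intro x hx y hy
    rw [hmem] at hx hy
    rw [circulantGraph_one_adj_iff_val hn1]
    simp only [P] at hx hy
    omega
  refine ⟨F, hF, 0, fun x => ?_⟩
  have hlt := ZMod.val_lt x
  have hx : x = 0 - 1 ∨ x = 0 ∨ x = 0 + 1 ↔ x.val + 1 = n ∨ x.val = 0 ∨ x.val = 1 := by
    rw [zero_sub, zero_add, ← ZMod.val_eq_zero, ← ZMod.val_eq_one hn1, eq_neg_iff_add_eq_zero,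
      eq_comm, ZMod.eq_add_one_iff_val hn1, ZMod.val_zero]
    omega
  rw [singleton_mem_linkC_indComplex hF, hx]
  simp only [hmem, circulantGraph_one_adj_iff_val hn1]
  constructor
  · rintro ⟨hxF, hadj⟩
    by_contra hne
    obtain ⟨m, hmn, hPm, hm⟩ : ∃ m < n, P m ∧ (m = x.val ∨ m = x.val + 1 ∨ m + 1 = x.val) := by
      by_cases h₁ : n ≤ x.val + 4
      · exact ⟨n - 3, by omega, .inl rfl, by omega⟩
      by_cases h₂ : x.val % 2 = 1
      · exact ⟨x.val, hlt, .inr ⟨h₂, by omega, by omega⟩, .inl rfl⟩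
      by_cases h₃ : x.val = 2
      · exact ⟨3, by omega, show 3 = n - 3 ∨ (3 % 2 = 1 ∧ 3 ≤ 3 ∧ 3 + 5 ≤ n) by omega, by omega⟩
      · exact ⟨x.val - 1, by omega, .inr ⟨by omega, by omega, by omega⟩, by omega⟩
    have hval : (m : ZMod n).val = m := ZMod.val_cast_of_lt hmn
    rcases hm with hm | hm
    · exact hxF (hm ▸ hPm)
    · exact hadj m (by rwa [hval]) (by rw [hval]; omega)
  · intro hx
    refine ⟨by simp only [P]; omega, fun y hy => ?_⟩
    simp only [P] at hy
    omega

end Cycle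

/-- The cycle graph `C_n` (`n ≥ 3`) is `S₂` iff `n = 3, 5,` or `7`. -/
theorem cycle_S2_iff (n : ℕ) (hn : 3 ≤ n) :
    GraphS2 (circulantGraph n ({1} : Set ℕ)) ↔ n = 3 ∨ n = 5 ∨ n = 7 := by
  constructor
  · intro hS2
    by_contra hn'
    rcases (show n = 4 ∨ (6 ≤ n ∧ n ≠ 7) by omega) with rfl | ⟨h6, h7⟩
    · exact not_graphS2_four hS2
    · obtain ⟨F, hF, c, hfree⟩ := exists_mem_linkC_iff_of_ne_seven h6 h7
      exact not_graphS2_of_mem_linkC_iff (by omega) hF hfree hS2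
  · rintro (rfl | h57)
    · exact graphS2_three
    · exact graphS2_of_mem_linkC_add_two_or_sub_two (by omega)
        fun F hF _ => mem_linkC_add_two_or_sub_two h57 hF
end

section
/- Let b ≥ 2 and m ≥ 1 be integers and let G = C(mb; 1, b) be the one-paired circulant graph on mb vertices. Then G satisfies Serre's condition S_2 if and only if m = 1. -/
/-!
In `C(n; 1, b)` two vertices are adjacent exactly when they differ mod `b`, so the graph is
complete multipartite with the residue classes mod `b` as parts, and its independence complex is
a disjoint union of `b` simplices. If `n = b` the graph is complete, the complex has no edges and
`S₂` holds vacuously. If `n > b`, then `{0, b}` is an edge of the complex, but no edge joins two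
residue classes, so the complex (the link of the empty face) is disconnected.
-/

variable {V : Type*}

theorem SimpleGraph.Reachable.apply_eq_of_forall_adj {α : Type*} {G : SimpleGraph V} {f : V → α}
    (hf : ∀ u v, G.Adj u v → f u = f v) {u v : V} (h : G.Reachable u v) : f u = f v := by
  rw [SimpleGraph.reachable_iff_reflTransGen] at h
  induction h with
  | refl => rfl
  | tail _ hadj ih => exact ih.trans (hf _ _ hadj)

section Complex

variable [DecidableEq V]

@[simp]
theorem linkC_empty (Δ : Set (Finset V)) : linkC Δ ∅ = Δ := by
  ext F
  simp [linkC]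

theorem IsS2.complexConnected {Δ : Set (Finset V)} (h : IsS2 Δ) (h₀ : ∅ ∈ Δ)
    (hdim : ∃ F ∈ Δ, 2 ≤ F.card) : ComplexConnected Δ := by
  simpa using h ∅ h₀ (by simpa using hdim)

end Complex

section IndComplex

variable {G : SimpleGraph V}

theorem empty_mem_indComplex : (∅ : Finset V) ∈ IndComplex G := by
  simp [IndComplex]

theorem singleton_mem_indComplex (v : V) : ({v} : Finset V) ∈ IndComplex G := by
  simp [IndComplex]

variable [DecidableEq V]

theorem pair_mem_indComplex_iff {u v : V} : ({u, v} : Finset V) ∈ IndComplex G ↔ ¬G.Adj u v := by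
  simp only [IndComplex, Set.mem_ofPred_eq, Finset.mem_insert, Finset.mem_singleton]
  constructor
  · intro h
    exact h u (Or.inl rfl) v (Or.inr rfl)
  · rintro h x (rfl | rfl) y (rfl | rfl) hxy
    exacts [hxy.ne rfl, h hxy, h hxy.symm, hxy.ne rfl]

theorem ComplexConnected.reachable_compl (h : ComplexConnected (IndComplex G)) (u w : V) :
    Gᶜ.Reachable u w := by
  rw [SimpleGraph.reachable_iff_reflTransGen]
  refine Relation.ReflTransGen.mono (fun a b hab => ?_)
    _ _ (h u (singleton_mem_indComplex u) w (singleton_mem_indComplex w))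
  exact (G.compl_adj a b).2 ⟨hab.1, pair_mem_indComplex_iff.1 hab.2⟩

theorem GraphS2.reachable_compl (h : GraphS2 G) {u v : V} (hne : u ≠ v) (huv : ¬G.Adj u v)
    (x y : V) : Gᶜ.Reachable x y := by
  refine ComplexConnected.reachable_compl (h.complexConnected empty_mem_indComplex ?_) x y
  exact ⟨{u, v}, pair_mem_indComplex_iff.2 huv, (Finset.card_pair hne).ge⟩

theorem graphS2_top : GraphS2 (⊤ : SimpleGraph V) := by
  rintro F - ⟨W, ⟨-, hW⟩, hcard⟩
  obtain ⟨u, hu, v, hv, huv⟩ := Finset.one_lt_card.1 hcard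
  exact absurd huv (hW u (Finset.mem_union_left _ hu) v (Finset.mem_union_left _ hv))

end IndComplex

section OnePaired

variable {n b : ℕ} [NeZero n]

theorem ZMod.dvd_val_sub_iff (hbn : b ∣ n) (x y : ZMod n) :
    b ∣ (x - y).val ↔ ZMod.castHom hbn (ZMod b) x = ZMod.castHom hbn (ZMod b) y := by
  rw [← ZMod.natCast_eq_zero_iff, ← ZMod.cast_eq_val, ← ZMod.castHom_apply, map_sub, sub_eq_zero]

theorem circulantGraph_onePairedSet_one_adj_iff (hbn : b ∣ n) {x y : ZMod n} :
    (circulantGraph n (onePairedSet n 1 b)).Adj x y ↔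
      ZMod.castHom hbn (ZMod b) x ≠ ZMod.castHom hbn (ZMod b) y := by
  simp only [circulantGraph, onePairedSet, Set.mem_ofPred_eq, one_mul, one_dvd, true_and,
    ZMod.dvd_val_sub_iff hbn]
  constructor
  · rintro ⟨-, ⟨-, -, h⟩ | ⟨-, -, h⟩⟩
    exacts [h, Ne.symm h]
  · intro h
    have hne : x - y ≠ 0 := sub_ne_zero.2 fun hxy => h (hxy ▸ rfl)
    have hpos := ZMod.val_pos.2 hne
    have hneg : (y - x).val = n - (x - y).val := by
      rw [← neg_sub, ZMod.neg_val, if_neg hne]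
    have hlt := ZMod.val_lt (x - y)
    refine ⟨fun hxy => h (hxy ▸ rfl), ?_⟩
    by_cases hle : (x - y).val ≤ n / 2
    · exact Or.inl ⟨hpos, hle, h⟩
    · exact Or.inr ⟨by omega, by omega, Ne.symm h⟩

theorem graphS2_circulantGraph_onePairedSet_one_iff (hb : 1 < b) (hbn : b ∣ n) :
    GraphS2 (circulantGraph n (onePairedSet n 1 b)) ↔ n = b := by
  have : Fact (1 < b) := ⟨hb⟩
  set G := circulantGraph n (onePairedSet n 1 b)
  set f := ZMod.castHom hbn (ZMod b)
  have hnonadj (x y : ZMod n) : ¬G.Adj x y ↔ f x = f y :=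
    (circulantGraph_onePairedSet_one_adj_iff hbn).not_left
  constructor
  · intro h
    by_contra hnb
    have hb0 : (b : ZMod n) ≠ 0 := by
      rw [Ne, ZMod.natCast_eq_zero_iff]
      exact Nat.not_dvd_of_pos_of_lt (by omega) <|
        lt_of_le_of_ne (Nat.le_of_dvd (NeZero.pos n) hbn) (Ne.symm hnb)
    have hreach := h.reachable_compl hb0 ((hnonadj _ _).2 (by simp [f])) 0 1
    have h01 : f 0 = f 1 :=
      hreach.apply_eq_of_forall_adj fun u v huv => (hnonadj u v).1 ((G.compl_adj u v).1 huv).2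
    simp at h01
  · rintro rfl
    have hG : G = ⊤ := by
      ext x y
      rw [SimpleGraph.top_adj, circulantGraph_onePairedSet_one_adj_iff hbn]
      simp
    rw [hG]
    exact graphS2_top

end OnePaired

/-- The one-paired circulant graph `C(mb; 1, b)` (with `b ≥ 2`, `m ≥ 1`) is `S₂`
iff `m = 1`. -/
theorem onePaired_a_one_S2_iff (b m : ℕ) (hb : 2 ≤ b) (hm : 1 ≤ m) :
    GraphS2 (circulantGraph (m * b) (onePairedSet (m * b) 1 b)) ↔ m = 1 := by
  have : NeZero (m * b) := ⟨by positivity⟩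
  rw [graphS2_circulantGraph_onePairedSet_one_iff hb (dvd_mul_left b m)]
  exact Nat.mul_eq_right (by omega)
end
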